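/- Let G be a symmetric numerical semigroup with multiplicity e = n₁ and Frobenius number f, and suppose the elasticity of f + n₁ is 1, i.e. ord_G(f + n₁) = min-ord_G(f + n₁). Then for every z ∈ G with z > f, ord_G(z) ≥ ord_G(f + n₁); consequently min{ord_G(z) : z ∈ G, z > f} = ord_G(f + n₁). -/

import Mathlib

/-- The numerical semigroup generated by `n 0, …, n (d-1)`. -/
def semigroupGen (d : ℕ) (n : Fin d → ℕ) : Set ℕ :=
  {z | ∃ a : Fin d → ℕ, ∑ i, a i * n i = z}

/-- The set of lengths `∑ aᵢ` of representations `z = ∑ aᵢ nᵢ`. -/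
def repLengths (d : ℕ) (n : Fin d → ℕ) (z : ℕ) : Set ℕ :=
  {s | ∃ a : Fin d → ℕ, (∑ i, a i * n i = z) ∧ (∑ i, a i = s)}

/-- Membership of an integer in the numerical semigroup. -/
def memZ (d : ℕ) (n : Fin d → ℕ) (z : ℤ) : Prop :=
  ∃ x ∈ semigroupGen d n, (x : ℤ) = z

/-- `G` is symmetric with respect to the Frobenius number `f`. -/
def IsSymmetricWith (d : ℕ) (n : Fin d → ℕ) (f : ℕ) : Prop :=
  ∀ z : ℤ, memZ d n z ↔ ¬ memZ d n ((f : ℤ) - z)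

/-- The given generators are a minimal generating system. -/
def MinimallyGenerated (d : ℕ) (n : Fin d → ℕ) : Prop :=
  ∀ i : Fin d, ¬ ∃ a : Fin d → ℕ, a i = 0 ∧ ∑ j, a j * n j = n i

/-!
Write `e = n₁`. Every `z ∈ G` decomposes as `z = w + q e` with `w` in the Apéry set of `e`,
and by symmetry `w + x = f + e` for some `x ∈ G`. Concatenating representations of `w` and `x`
gives a representation of `f + e`, of length `≥ o` as elasticity one makes `o` the minimal
length there; adding `q` copies of `e` to one of `w` gives a representation of `z`. When `z > f`
we have `x < (q + 1) e`, so every representation of `x` has length at most `q`, and hence `z`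
has a representation of length `≥ o`.
-/

open Finset

/-- The Apéry set of `e` in `S`; `w - e ∉ S` is phrased as `y + e ≠ w` to avoid truncated
subtraction. -/
def aperySet (S : Set ℕ) (e : ℕ) : Set ℕ :=
  {w | w ∈ S ∧ ∀ y ∈ S, y + e ≠ w}

theorem exists_mem_aperySet_add_mul_eq {S : Set ℕ} {e : ℕ} (he : 0 < e) {z : ℕ} (hz : z ∈ S) :
    ∃ w ∈ aperySet S e, ∃ q, w + q * e = z := by
  induction z using Nat.strong_induction_on with
  | _ z ih =>
    by_cases hsub : ∃ y ∈ S, y + e = z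
    · obtain ⟨y, hyS, rfl⟩ := hsub
      obtain ⟨w, hw, q, rfl⟩ := ih y (by omega) hyS
      exact ⟨w, hw, q + 1, by ring⟩
    · push Not at hsub
      exact ⟨z, ⟨hz, hsub⟩, 0, by simp⟩

section Representations

variable {d : ℕ} {n : Fin d → ℕ}

theorem mem_semigroupGen_of_mem_repLengths {z s : ℕ} (hs : s ∈ repLengths d n z) :
    z ∈ semigroupGen d n :=
  let ⟨a, ha, _⟩ := hs
  ⟨a, ha⟩

theorem exists_mem_repLengths_of_mem_semigroupGen {z : ℕ} (hz : z ∈ semigroupGen d n) :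
    ∃ s, s ∈ repLengths d n z :=
  let ⟨a, ha⟩ := hz
  ⟨_, a, ha, rfl⟩

theorem add_mem_repLengths_add {z z' s s' : ℕ} (hs : s ∈ repLengths d n z)
    (hs' : s' ∈ repLengths d n z') : s + s' ∈ repLengths d n (z + z') := by
  obtain ⟨a, rfl, rfl⟩ := hs
  obtain ⟨b, rfl, rfl⟩ := hs'
  exact ⟨a + b, by simp [add_mul, sum_add_distrib], by simp [sum_add_distrib]⟩

theorem mem_repLengths_mul_self (i : Fin d) (q : ℕ) : q ∈ repLengths d n (q * n i) :=
  ⟨Pi.single i q, by simp [Pi.single_apply, ite_mul], by simp⟩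

theorem mul_le_of_mem_repLengths {e z s : ℕ} (he : ∀ i, e ≤ n i) (hs : s ∈ repLengths d n z) :
    s * e ≤ z := by
  obtain ⟨a, rfl, rfl⟩ := hs
  rw [sum_mul]
  exact sum_le_sum fun i _ => Nat.mul_le_mul_left _ (he i)

theorem IsSymmetricWith.exists_add_eq {f e w : ℕ} (hsym : IsSymmetricWith d n f)
    (hw : w ∈ aperySet (semigroupGen d n) e) : ∃ x ∈ semigroupGen d n, w + x = f + e := by
  have hnot : ¬ memZ d n ((w : ℤ) - e) := by
    rintro ⟨y, hy, hyw⟩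
    exact hw.2 y hy (by omega)
  obtain ⟨x, hx, hxw⟩ := of_not_not ((hsym _).not.mp hnot)
  exact ⟨x, hx, by omega⟩

theorem le_of_mem_upperBounds_repLengths {f o z s : ℕ} {i₀ : Fin d} (hpos : 0 < n i₀)
    (hle : ∀ i, n i₀ ≤ n i) (hsym : IsSymmetricWith d n f)
    (ho : o ∈ lowerBounds (repLengths d n (f + n i₀)))
    (hz : z ∈ semigroupGen d n) (hfz : f < z) (hs : s ∈ upperBounds (repLengths d n z)) :
    o ≤ s := by
  obtain ⟨w, hw, q, rfl⟩ := exists_mem_aperySet_add_mul_eq hpos hz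
  obtain ⟨x, hx, hwx⟩ := hsym.exists_add_eq hw
  obtain ⟨la, hla⟩ := exists_mem_repLengths_of_mem_semigroupGen hw.1
  obtain ⟨lb, hlb⟩ := exists_mem_repLengths_of_mem_semigroupGen hx
  have hola : o ≤ la + lb := ho (hwx ▸ add_mem_repLengths_add hla hlb)
  have hzlen : la + q ≤ s := hs (add_mem_repLengths_add hla (mem_repLengths_mul_self i₀ q))
  have hlbq : lb < q + 1 := by
    refine Nat.lt_of_mul_lt_mul_right (a := n i₀) ?_
    calc lb * n i₀ ≤ x := mul_le_of_mem_repLengths hle hlb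
      _ < (q + 1) * n i₀ := by rw [add_one_mul]; omega
  omega

end Representations

theorem stmt_18_general (d : ℕ) (hd : 0 < d) (n : Fin d → ℕ)
    (hpos : ∀ i, 0 < n i) (hmono : StrictMono n)
    (f : ℕ)
    (hsym : IsSymmetricWith d n f)
    (o : ℕ)
    (homax : IsGreatest (repLengths d n (f + n ⟨0, hd⟩)) o)
    (homin : IsLeast (repLengths d n (f + n ⟨0, hd⟩)) o) :
    (∀ z ∈ semigroupGen d n, f < z →
      ∀ s, IsGreatest (repLengths d n z) s → o ≤ s) ∧
    IsLeast {s | ∃ z ∈ semigroupGen d n, f < z ∧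
      IsGreatest (repLengths d n z) s} o := by
  have hle : ∀ i, n ⟨0, hd⟩ ≤ n i := fun i => hmono.monotone (Fin.le_def.mpr (Nat.zero_le _))
  have key : ∀ z ∈ semigroupGen d n, f < z → ∀ s, IsGreatest (repLengths d n z) s → o ≤ s :=
    fun z hz hfz s hs =>
      le_of_mem_upperBounds_repLengths (hpos _) hle hsym homin.2 hz hfz hs.2
  refine ⟨key, ⟨f + n ⟨0, hd⟩, ?_, ?_, homax⟩, ?_⟩
  · exact mem_semigroupGen_of_mem_repLengths homax.1
  · have := hpos ⟨0, hd⟩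
    omega
  · rintro s ⟨z, hz, hfz, hs⟩
    exact key z hz hfz s hs

theorem stmt_18 (d : ℕ) (hd : 0 < d) (n : Fin d → ℕ)
    (hpos : ∀ i, 0 < n i) (hmono : StrictMono n)
    (hmin : MinimallyGenerated d n)
    (f : ℕ) (hfnot : f ∉ semigroupGen d n)
    (hfro : ∀ m : ℕ, f < m → m ∈ semigroupGen d n)
    (hsym : IsSymmetricWith d n f)
    (o : ℕ)
    (homax : IsGreatest (repLengths d n (f + n ⟨0, hd⟩)) o)
    (homin : IsLeast (repLengths d n (f + n ⟨0, hd⟩)) o) :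
    (∀ z ∈ semigroupGen d n, f < z →
      ∀ s, IsGreatest (repLengths d n z) s → o ≤ s) ∧
    IsLeast {s | ∃ z ∈ semigroupGen d n, f < z ∧
      IsGreatest (repLengths d n z) s} o :=
  stmt_18_general d hd n hpos hmono f hsym o homax homin
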